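/- For the recession function F^∞ : ℝ^{d+1} → ℝ^{d+1} with components (F^∞(α))_0 = min{α_0, 2α_0+α_1}, (F^∞(α))_i = min{α_i, α_{i-1}+2α_i, 2α_i+α_{i+1}, -α_{i-1}+2α_i-α_{i+1}} (1 ≤ i ≤ d-1), (F^∞(α))_d = min{α_d, α_{d-1}+2α_d}, one has F^∞(α) ≠ -α for every nonzero α ∈ ℝ^{d+1}. -/

import Mathlib

/-!
Every component of `F^∞(α)` is a minimum that includes `α_i`, so `F^∞(α) = -α` forces `α ≥ 0`.
At an index where `α` is maximal, every term of that minimum is then nonnegative (the second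
difference `-α_{i-1} + 2α_i - α_{i+1}` included), so `-α_i ≥ 0`; the maximum of `α` is `0` and
`α` vanishes.
-/

/-- The recession function `F_d^∞ : ℝ^{d+1} → ℝ^{d+1}`. -/
noncomputable def recessionFn (d : ℕ) (α : Fin (d + 1) → ℝ) : Fin (d + 1) → ℝ :=
  fun i =>
    if i.val = 0 then min (α i) (2 * α i + α (i + 1))
    else if i.val = d then min (α i) (α (i - 1) + 2 * α i)
    else min (min (α i) (α (i - 1) + 2 * α i))
             (min (2 * α i + α (i + 1)) (-α (i - 1) + 2 * α i - α (i + 1)))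

lemma recessionFn_le (d : ℕ) (α : Fin (d + 1) → ℝ) : recessionFn d α ≤ α := by
  intro i
  unfold recessionFn
  split_ifs
  · exact min_le_left _ _
  · exact min_le_left _ _
  · exact (min_le_left _ _).trans (min_le_left _ _)

lemma recessionFn_nonneg_of_isMax {d : ℕ} {α : Fin (d + 1) → ℝ} (hα : 0 ≤ α) {i : Fin (d + 1)}
    (hi : ∀ j, α j ≤ α i) : 0 ≤ recessionFn d α i := by
  have hprev : 0 ≤ α (i - 1) := hα _
  have hnext : 0 ≤ α (i + 1) := hα _
  have hprev_le := hi (i - 1)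
  have hnext_le := hi (i + 1)
  have hself : 0 ≤ α i := hα i
  unfold recessionFn
  split_ifs
  · exact le_min hself (by linarith)
  · exact le_min hself (by linarith)
  · exact le_min (le_min hself (by linarith)) (le_min (by linarith) (by linarith))

lemma nonneg_of_recessionFn_eq_neg {d : ℕ} {α : Fin (d + 1) → ℝ} (h : recessionFn d α = -α) :
    0 ≤ α := fun i => by
  have := recessionFn_le d α i
  rw [h, Pi.neg_apply] at this
  exact neg_le_self_iff.mp this

theorem stmt11 (d : ℕ) (α : Fin (d + 1) → ℝ) (hα : α ≠ 0) :
    recessionFn d α ≠ -α := by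
  intro h
  have hnonneg := nonneg_of_recessionFn_eq_neg h
  obtain ⟨i, hi⟩ := Finite.exists_max α
  have hmax_nonpos : α i ≤ 0 := by
    have := recessionFn_nonneg_of_isMax hnonneg hi
    rw [h, Pi.neg_apply] at this
    linarith
  exact hα <| le_antisymm (fun j => (hi j).trans hmax_nonpos) hnonneg
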